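/- The indicator vector of D := {1,2,3,4,6,8,9,12,13,16,18,23} belongs to 𝒞₂₄ (D is a dodecad). Let ρ : D → {1,…,12} be the bijection 12↦1, 8↦2, 18↦3, 13↦4, 2↦5, 16↦6, 3↦7, 23↦8, 1↦9, 6↦10, 4↦11, 9↦12. Then the map sending each σ in the setwise stabilizer {σ ∈ M₂₄ : σ(D) = D} to the permutation ρ∘(σ restricted to D)∘ρ⁻¹ of {1,…,12} is an injective group homomorphism whose image is exactly the Mathieu group M₁₂ (the subgroup of S₁₂ generated by A = (1,6,5,4,10,9,12,7,11,3,2), B = (1,4,6,12,2)(3,11,9,7,5), C = (1,7)(2,5)(3,12)(4,9)(6,11)(8,10), D = (1,2)(3,5)(4,12)(7,11)). -/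

import Mathlib

/-- Coordinates are labelled `1,…,24`, realized inside `Fin 25` (the coordinate `0` is unused:
all codewords vanish there and every code automorphism fixes it). -/
abbrev X24 : Type := Fin 25

/-- The indicator vector of a set of coordinates. -/
def indvec (S : Finset X24) : X24 → ZMod 2 := fun i => if i ∈ S then 1 else 0

/-- Supports of the twelve generators of the extended binary Golay code. -/
def golayGen : Fin 12 → Finset X24 :=
  ![{1, 2, 3, 5, 12, 16, 18, 22},
    {3, 4, 6, 9, 15, 17, 21, 22},
    {4, 7, 8, 10, 12, 15, 16, 19},
    {7, 8, 11, 15, 16, 17, 18, 23},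
    {1, 2, 4, 7, 8, 16, 18, 21},
    {1, 5, 8, 13, 14, 16, 18, 23},
    {10, 11, 12, 13, 14, 17, 20, 22},
    {3, 8, 9, 11, 13, 18, 19, 23},
    {2, 5, 9, 10, 14, 19, 21, 24},
    {1, 4, 7, 8, 9, 13, 15, 16, 18, 19, 22, 23},
    {1, 2, 3, 7, 8, 10, 11, 13, 16, 18, 22, 23},
    {1, 2, 5, 7, 8, 9, 10, 12, 15, 16, 18, 23}]

/-- The extended binary Golay code `𝒞₂₄`. -/
def Golay : Submodule (ZMod 2) (X24 → ZMod 2) :=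
  Submodule.span (ZMod 2) (Set.range fun i => indvec (golayGen i))

/-- The Mathieu group `M₂₄`: the group of coordinate permutations mapping `𝒞₂₄` onto itself. -/
def M24 : Subgroup (Equiv.Perm X24) where
  carrier := {σ | ∀ c : X24 → ZMod 2, c ∈ Golay ↔ c ∘ σ ∈ Golay}
  one_mem' := fun c => Iff.rfl
  mul_mem' := fun {a b} ha hb c => (ha c).trans (hb (c ∘ a))
  inv_mem' := by
    intro a ha c
    have h2 := ha (c ∘ ⇑a⁻¹)
    rw [show (c ∘ ⇑a⁻¹) ∘ ⇑a = c from by funext x; simp] at h2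
    exact h2.symm

/-- The dodecad `D = {1,2,3,4,6,8,9,12,13,16,18,23}`. -/
def Dset : Finset X24 := {1, 2, 3, 4, 6, 8, 9, 12, 13, 16, 18, 23}

open Pointwise in
/-- The setwise stabilizer of `D` in `M₂₄`. -/
def StabD : Subgroup (Equiv.Perm X24) :=
  M24 ⊓ MulAction.stabilizer (Equiv.Perm X24) (↑Dset : Set X24)

/-- The relabelling bijection `ρ : D → {1,…,12}` (realized inside `Fin 13`, with value `0` on
the complement of `D`). -/
def rho : X24 → Fin 13 := fun x =>
  if x = 12 then 1 else if x = 8 then 2 else if x = 18 then 3 else if x = 13 then 4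
  else if x = 2 then 5 else if x = 16 then 6 else if x = 3 then 7 else if x = 23 then 8
  else if x = 1 then 9 else if x = 6 then 10 else if x = 4 then 11 else if x = 9 then 12
  else 0

/-- The generator `A = (1,6,5,4,10,9,12,7,11,3,2)` of `M₁₂` (inside `Equiv.Perm (Fin 13)`,
with `0` unused). -/
def pA : Equiv.Perm (Fin 13) := List.formPerm [1, 6, 5, 4, 10, 9, 12, 7, 11, 3, 2]

/-- The generator `B = (1,4,6,12,2)(3,11,9,7,5)` of `M₁₂`. -/
def pB : Equiv.Perm (Fin 13) := List.formPerm [1, 4, 6, 12, 2] * List.formPerm [3, 11, 9, 7, 5]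

/-- The generator `C = (1,7)(2,5)(3,12)(4,9)(6,11)(8,10)` of `M₁₂`. -/
def pC : Equiv.Perm (Fin 13) :=
  List.formPerm [1, 7] * List.formPerm [2, 5] * List.formPerm [3, 12] *
    List.formPerm [4, 9] * List.formPerm [6, 11] * List.formPerm [8, 10]

/-- The generator `D = (1,2)(3,5)(4,12)(7,11)` of `M₁₂`. -/
def pD : Equiv.Perm (Fin 13) :=
  List.formPerm [1, 2] * List.formPerm [3, 5] * List.formPerm [4, 12] * List.formPerm [7, 11]

/-- The Mathieu group `M₁₂`. -/
def M12 : Subgroup (Equiv.Perm (Fin 13)) := Subgroup.closure {pA, pB, pC, pD}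

/-
Every codeword of `𝒞₂₄` is the sum of a subset of the twelve generators, so all 4096 codewords can
be listed as bit masks and checked by computation: `𝒞₂₄` has minimum weight 8. Hence two octads
(codewords of weight 8) sharing five points coincide, and an automorphism `σ` maps an octad `O` to
the unique octad through the images of any five points of `O`. Starting from `σ(D) = D` and five
fixed points of `D`, propagating this rule through the 759 octads, with a small case split,
forces `σ = 1`. So restriction to `D` is faithful on the stabilizer of `D`, and an element of the
stabilizer is determined by the images of five points. The image contains `M₁₂` because
`A, B, C, D` lift to explicit elements of `M₂₄`; conversely `M₁₂` is 5-transitive (explicit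
transversal words), so every element of the image agrees on five points with an element of `M₁₂`,
hence equals it.
-/

open Equiv

/- Vectors over `𝔽₂` are encoded as bit masks so that the finite checks below run on fast `Nat`
operations in the kernel. -/

section Masks

variable {n : ℕ}

def vecOfMask (m : ℕ) : Fin n → ZMod 2 := fun x => if m.testBit x then 1 else 0

lemma vecOfMask_apply_eq_one_iff (m : ℕ) (x : Fin n) : vecOfMask m x = 1 ↔ m.testBit x := by
  unfold vecOfMask; split_ifs with h <;> simp [h]

lemma vecOfMask_zero : (vecOfMask 0 : Fin n → ZMod 2) = 0 := by
  ext x; simp [vecOfMask]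

lemma vecOfMask_xor (a b : ℕ) :
    (vecOfMask (a ^^^ b) : Fin n → ZMod 2) = vecOfMask a + vecOfMask b := by
  ext x
  simp only [vecOfMask, Nat.testBit_xor, Pi.add_apply]
  cases a.testBit x <;> cases b.testBit x <;> decide

def finsetMask (S : Finset (Fin n)) : ℕ := ∑ x ∈ S, 2 ^ (x : ℕ)

lemma testBit_finsetMask (S : Finset (Fin n)) (i : ℕ) :
    (finsetMask S).testBit i ↔ ∃ x ∈ S, (x : ℕ) = i := by
  have h := Finset.toFinset_bitIndices_sum_two_pow (S.map Fin.valEmbedding)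
  rw [Finset.sum_map] at h
  rw [← Nat.mem_bitIndices, ← List.mem_toFinset]
  change i ∈ (∑ x ∈ S, 2 ^ Fin.valEmbedding x).bitIndices.toFinset ↔ _
  rw [h]
  simp

lemma vecOfMask_finsetMask (S : Finset (Fin n)) (x : Fin n) :
    vecOfMask (finsetMask S) x = if x ∈ S then 1 else 0 := by
  simp only [vecOfMask, testBit_finsetMask, Fin.val_inj, exists_eq_right]

def spanMasks : List ℕ → List ℕ
  | [] => [0]
  | g :: gs => spanMasks gs ++ (spanMasks gs).map (· ^^^ g)

theorem mem_span_vecOfMask_iff (gs : List ℕ) (c : Fin n → ZMod 2) :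
    c ∈ Submodule.span (ZMod 2) (vecOfMask '' {g | g ∈ gs}) ↔
      ∃ m ∈ spanMasks gs, vecOfMask m = c := by
  induction gs generalizing c with
  | nil => simp [spanMasks, vecOfMask_zero, eq_comm]
  | cons g gs ih =>
    have hs : (vecOfMask '' {h | h ∈ g :: gs} : Set (Fin n → ZMod 2)) =
        insert (vecOfMask g) (vecOfMask '' {h | h ∈ gs}) := by
      ext; simp [or_and_right, exists_or, eq_comm]
    rw [hs, Submodule.mem_span_insert]
    constructor
    · rintro ⟨a, z, hz, rfl⟩
      obtain ⟨m, hm, rfl⟩ := (ih z).1 hz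
      obtain rfl | rfl : a = 0 ∨ a = 1 := (by decide : ∀ a : ZMod 2, a = 0 ∨ a = 1) a
      · exact ⟨m, by simp [spanMasks, hm], by simp⟩
      · exact ⟨m ^^^ g, by simp [spanMasks, hm], by simp [vecOfMask_xor, add_comm]⟩
    · rintro ⟨m, hm, rfl⟩
      simp only [spanMasks, List.mem_append, List.mem_map] at hm
      rcases hm with hm | ⟨m', hm', rfl⟩
      · exact ⟨0, vecOfMask m, (ih _).2 ⟨m, hm, rfl⟩, by simp⟩
      · exact ⟨1, vecOfMask m', (ih _).2 ⟨m', hm', rfl⟩, by simp [vecOfMask_xor, add_comm]⟩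

def popcount : ℕ → ℕ → ℕ
  | 0, _ => 0
  | k + 1, m => m % 2 + popcount k (m / 2)

lemma hammingNorm_vecOfMask (m : ℕ) :
    hammingNorm (vecOfMask m : Fin n → ZMod 2) = popcount n m := by
  induction n generalizing m with
  | zero => simp [hammingNorm, popcount]
  | succ n ih =>
    rw [popcount, ← ih, hammingNorm, hammingNorm, Fin.card_filter_univ_succ]
    simp only [vecOfMask, Fin.val_succ, Fin.val_zero, Nat.testBit_div_two, ne_eq]
    rcases Nat.mod_two_eq_zero_or_one m with h | h <;> simp [Nat.testBit_zero, h, add_comm]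

end Masks

lemma hammingNorm_comp_perm {ι β : Type*} [Fintype ι] [DecidableEq β] [Zero β]
    (c : ι → β) (σ : Perm ι) : hammingNorm (c ∘ σ) = hammingNorm c := by
  rw [hammingNorm, hammingNorm, ← Finset.card_map σ.toEmbedding]
  congr 1
  ext y
  simp

def golayMasks : List ℕ := spanMasks ((List.finRange 12).map fun i => finsetMask (golayGen i))

theorem mem_golay_iff (c : X24 → ZMod 2) : c ∈ Golay ↔ ∃ m ∈ golayMasks, vecOfMask m = c := by
  have : (Set.range fun i => indvec (golayGen i)) =
      vecOfMask '' {g | g ∈ (List.finRange 12).map fun i => finsetMask (golayGen i)} := by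
    ext c
    simp [indvec, funext_iff, vecOfMask_finsetMask, eq_comm]
  rw [Golay, this, mem_span_vecOfMask_iff, golayMasks]

lemma vecOfMask_mem_golay {m : ℕ} (hm : m ∈ golayMasks) : vecOfMask m ∈ Golay :=
  (mem_golay_iff _).2 ⟨m, hm, rfl⟩

lemma indvec_mem_golay {S : Finset X24} (hS : finsetMask S ∈ golayMasks) : indvec S ∈ Golay := by
  convert vecOfMask_mem_golay hS using 1
  ext x; simp [indvec, vecOfMask_finsetMask]

set_option maxRecDepth 100000 in
lemma golayMasks_eq_zero_or_eight_le_popcount :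
    ∀ m ∈ golayMasks, m = 0 ∨ 8 ≤ popcount 25 m := by
  decide +kernel

theorem eight_le_hammingNorm_of_mem_golay {c : X24 → ZMod 2} (hc : c ∈ Golay) (h0 : c ≠ 0) :
    8 ≤ hammingNorm c := by
  obtain ⟨m, hm, rfl⟩ := (mem_golay_iff c).1 hc
  rcases golayMasks_eq_zero_or_eight_le_popcount m hm with rfl | h
  · exact absurd vecOfMask_zero h0
  · rwa [hammingNorm_vecOfMask]

def IsOctad (c : X24 → ZMod 2) : Prop := c ∈ Golay ∧ hammingNorm c = 8

theorem IsOctad.eq_of_five_le_card {c d : X24 → ZMod 2} (hc : IsOctad c) (hd : IsOctad d)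
    (K : Finset X24) (hK : 5 ≤ K.card) (hKc : ∀ x ∈ K, c x = 1) (hKd : ∀ x ∈ K, d x = 1) :
    c = d := by
  by_contra hne
  have h8 := eight_le_hammingNorm_of_mem_golay (Golay.sub_mem hc.1 hd.1) (sub_ne_zero.2 hne)
  have hrest : ∀ e : X24 → ZMod 2, (∀ x ∈ K, e x = 1) → hammingNorm e = 8 →
      ((Finset.univ.filter fun x => e x ≠ 0) \ K).card = 8 - K.card := by
    intro e he he8
    rw [Finset.card_sdiff_of_subset, ← hammingNorm, he8]
    intro x hx; simp [he x hx]
  have hcover : (Finset.univ.filter fun x => (c - d) x ≠ 0) ⊆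
      ((Finset.univ.filter fun x => c x ≠ 0) \ K) ∪
        ((Finset.univ.filter fun x => d x ≠ 0) \ K) := by
    intro x hx
    simp only [Finset.mem_filter, Finset.mem_univ, true_and, Pi.sub_apply, sub_ne_zero] at hx
    have hxK : x ∉ K := fun h => hx (by rw [hKc x h, hKd x h])
    by_cases hcx : c x = 0
    · simp [hxK, hcx ▸ Ne.symm hx]
    · simp [hxK, hcx]
  have := (Finset.card_le_card hcover).trans (Finset.card_union_le _ _)
  rw [hrest c hKc hc.2, hrest d hKd hd.2, ← hammingNorm] at this
  omega

lemma IsOctad.comp {σ : Perm X24} (hσ : σ ∈ M24) {c : X24 → ZMod 2} (hc : IsOctad c) :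
    IsOctad (c ∘ σ) :=
  ⟨(hσ c).1 hc.1, (hammingNorm_comp_perm c σ).trans hc.2⟩

set_option maxRecDepth 100000 in
lemma golayMasks_testBit_zero : ∀ m ∈ golayMasks, m.testBit 0 = false := by decide +kernel

lemma apply_zero_of_mem_M24 {σ : Perm X24} (hσ : σ ∈ M24) : σ 0 = 0 := by
  have hvanish : ∀ c ∈ Golay, c 0 = 0 := by
    intro c hc
    obtain ⟨m, hm, rfl⟩ := (mem_golay_iff c).1 hc
    simp [vecOfMask, golayMasks_testBit_zero m hm]
  have hnot : ∀ i, σ 0 ∉ golayGen i := by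
    intro i hi
    have := hvanish _ ((hσ _).1 (Submodule.subset_span ⟨i, rfl⟩))
    simp [indvec, hi] at this
  exact (by decide : ∀ y : X24, (∀ i, y ∉ golayGen i) → y = 0) _ hnot

theorem mem_M24_of_forall_comp_mem {σ : Perm X24}
    (h : ∀ i, indvec (golayGen i) ∘ σ ∈ Golay) : σ ∈ M24 := by
  set L := LinearMap.funLeft (ZMod 2) (ZMod 2) σ
  have hL : Function.Injective L := LinearMap.funLeft_injective_of_surjective _ _ σ σ.surjective
  have hle : Golay ≤ Golay.comap L := by
    rw [Golay, Submodule.span_le]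
    rintro _ ⟨i, rfl⟩
    exact h i
  -- `L` restricts to an injective, hence surjective, self-map of the finite set `Golay`
  have hsurj : Function.Surjective fun c : Golay => (⟨L c, hle c.2⟩ : Golay) :=
    Finite.injective_iff_surjective.1 fun a b hab => Subtype.ext (hL (congrArg Subtype.val hab))
  refine fun c => ⟨fun hc => hle hc, fun hc => ?_⟩
  obtain ⟨d, hd⟩ := hsurj ⟨c ∘ σ, hc⟩
  exact hL (congrArg Subtype.val hd) ▸ d.2

theorem mem_M24_of_masks {σ : Perm X24}
    (h : ∀ i, finsetMask (Finset.univ.filter fun x => σ x ∈ golayGen i) ∈ golayMasks) :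
    σ ∈ M24 := by
  refine mem_M24_of_forall_comp_mem fun i => ?_
  convert indvec_mem_golay (h i) using 1
  ext x; simp [indvec]

def octads : List ℕ := golayMasks.filter (popcount 25 · = 8)

lemma isOctad_of_mem_octads {P : ℕ} (hP : P ∈ octads) : IsOctad (vecOfMask P) := by
  rw [octads, List.mem_filter] at hP
  exact ⟨vecOfMask_mem_golay hP.1, by rw [hammingNorm_vecOfMask]; simpa using hP.2⟩

lemma exists_mem_octads {c : X24 → ZMod 2} (hc : IsOctad c) : ∃ P ∈ octads, vecOfMask P = c := by
  obtain ⟨m, hm, rfl⟩ := (mem_golay_iff c).1 hc.1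
  have := hc.2
  rw [hammingNorm_vecOfMask] at this
  exact ⟨m, List.mem_filter.2 ⟨hm, by simpa using this⟩, rfl⟩

lemma exists_image_octad {σ : Perm X24} (hσ : σ ∈ M24) {O : ℕ} (hO : O ∈ octads) :
    ∃ Q ∈ octads, ∀ x, Q.testBit (σ x) ↔ O.testBit x := by
  obtain ⟨Q, hQ, hQO⟩ := exists_mem_octads ((isOctad_of_mem_octads hO).comp (inv_mem hσ))
  refine ⟨Q, hQ, fun x => ?_⟩
  rw [← vecOfMask_apply_eq_one_iff, ← vecOfMask_apply_eq_one_iff, hQO]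
  simp

def Admits (σ : Perm X24) (c : X24 → ℕ) : Prop := ∀ x, (c x).testBit (σ x)

def isSingleton (m : ℕ) : Bool := m == 2 ^ m.log2

lemma eq_two_pow_of_isSingleton {m i : ℕ} (h : isSingleton m) (hi : m.testBit i) : m = 2 ^ i := by
  rw [isSingleton, beq_iff_eq] at h
  rw [h, Nat.testBit_two_pow, decide_eq_true_eq] at hi
  rwa [← hi]

def octadPoints (O : ℕ) : List X24 := (List.finRange 25).filter (O.testBit ·)

def knownPoints (c : X24 → ℕ) (O : ℕ) : List X24 := (octadPoints O).filter (isSingleton ∘ c)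

def knownImages (c : X24 → ℕ) (O : ℕ) : ℕ := (knownPoints c O).foldr (fun x m => c x ||| m) 0

def octadsThrough (y : ℕ) : List ℕ := octads.filter (·.testBit y)

def lookupImage (c : X24 → ℕ) (O : ℕ) : Option ℕ :=
  (octadsThrough (knownImages c O).log2).find? fun P => knownImages c O &&& P == knownImages c O

/-- Once five points of the octad `O` have known images, `σ(O)` is the octad through them
(`IsOctad.eq_of_five_le_card`); if there is no such octad, no `σ` is admitted. -/
def refineOctad (c : X24 → ℕ) (O : ℕ) : X24 → ℕ :=
  if 5 ≤ (knownPoints c O).length then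
    match lookupImage c O with
    | some P => fun x => if O.testBit x then c x &&& P else c x ^^^ (c x &&& P)
    | none => fun _ => 0
  else c

def refineStep (c : X24 → ℕ) : X24 → ℕ :=
  (octads.filter fun O => 5 ≤ (knownPoints c O).length ∧ (knownPoints c O).length < 8).foldl
    refineOctad c

def certifyIdentity : ℕ → (X24 → ℕ) → Bool
  | 0, _ => false
  | n + 1, c =>
    let c := refineStep (refineStep c)
    (List.finRange 25).any (fun x => c x == 0) ||
    (List.finRange 25).all (fun x => c x == 2 ^ (x : ℕ)) ||
    ((List.finRange 25).find? fun x => !isSingleton (c x)).any fun x =>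
      (List.range 25).all fun y =>
        !(c x).testBit y || certifyIdentity n (Function.update c x (2 ^ y))

section Refinement

variable {σ : Perm X24} {c : X24 → ℕ} {O : ℕ}

lemma testBit_of_mem_knownPoints {x : X24} (hx : x ∈ knownPoints c O) : O.testBit x := by
  simp only [knownPoints, octadPoints, List.mem_filter] at hx
  exact hx.1.2

lemma testBit_knownImages (hc : Admits σ c) (i : ℕ) :
    (knownImages c O).testBit i ↔ ∃ x ∈ knownPoints c O, (σ x : ℕ) = i := by
  have hfoldr : ∀ l : List X24,
      (l.foldr (fun x m => c x ||| m) 0).testBit i ↔ ∃ x ∈ l, (c x).testBit i := by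
    intro l
    induction l with
    | nil => simp
    | cons x l ih => simp [Nat.testBit_or, ih]
  rw [knownImages, hfoldr]
  refine exists_congr fun x => and_congr_right fun hx => ?_
  have hsingle : isSingleton (c x) := by
    simp only [knownPoints, List.mem_filter, Function.comp] at hx
    exact hx.2
  rw [eq_two_pow_of_isSingleton hsingle (hc x), Nat.testBit_two_pow, decide_eq_true_eq]

lemma image_octad_eq (hσ : σ ∈ M24) (hO : O ∈ octads) {P : ℕ} (hP : P ∈ octads)
    (h5 : 5 ≤ (knownPoints c O).length) (hsub : ∀ x ∈ knownPoints c O, P.testBit (σ x))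
    (x : X24) : P.testBit (σ x) ↔ O.testBit x := by
  have hnodup : (knownPoints c O).Nodup := ((List.nodup_finRange 25).filter _).filter _
  have heq := (isOctad_of_mem_octads hO).eq_of_five_le_card ((isOctad_of_mem_octads hP).comp hσ)
    (knownPoints c O).toFinset (by rwa [List.toFinset_card_of_nodup hnodup])
    (fun y hy => (vecOfMask_apply_eq_one_iff _ _).2
      (testBit_of_mem_knownPoints (List.mem_toFinset.1 hy)))
    (fun y hy => (vecOfMask_apply_eq_one_iff _ _).2 (hsub y (List.mem_toFinset.1 hy)))
  rw [← vecOfMask_apply_eq_one_iff, ← vecOfMask_apply_eq_one_iff, heq]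
  rfl

lemma image_eq_of_lookupImage_eq_some (hσ : σ ∈ M24) (hc : Admits σ c) (hO : O ∈ octads)
    (h5 : 5 ≤ (knownPoints c O).length) {P : ℕ} (hP : lookupImage c O = some P) (x : X24) :
    P.testBit (σ x) ↔ O.testBit x := by
  have hMP := List.find?_some hP
  rw [beq_iff_eq] at hMP
  refine image_octad_eq hσ hO (List.mem_filter.1 (List.mem_of_find?_eq_some hP)).1 h5
    (fun y hy => ?_) x
  have := congrArg (Nat.testBit · (σ y)) hMP
  simpa [Nat.testBit_and, (testBit_knownImages hc _).2 ⟨y, hy, rfl⟩] using this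

lemma lookupImage_ne_none (hσ : σ ∈ M24) (hc : Admits σ c) (hO : O ∈ octads)
    (h5 : 5 ≤ (knownPoints c O).length) : lookupImage c O ≠ none := by
  intro hnone
  obtain ⟨Q, hQ, hQO⟩ := exists_image_octad hσ hO
  have hsub : ∀ i, (knownImages c O).testBit i → Q.testBit i := by
    intro i hi
    obtain ⟨x, hx, rfl⟩ := (testBit_knownImages hc i).1 hi
    exact (hQO x).2 (testBit_of_mem_knownPoints hx)
  have hne : knownImages c O ≠ 0 := by
    obtain ⟨x, hx⟩ := List.exists_mem_of_length_pos (by omega : 0 < (knownPoints c O).length)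
    intro h0
    simpa [h0] using (testBit_knownImages hc _).2 ⟨x, hx, rfl⟩
  refine List.find?_eq_none.1 hnone Q
    (List.mem_filter.2 ⟨hQ, by simpa using hsub _ (Nat.testBit_log2 hne)⟩) ?_
  rw [beq_iff_eq]
  refine Nat.eq_of_testBit_eq fun i => ?_
  rw [Nat.testBit_and]
  cases h : (knownImages c O).testBit i
  · rfl
  · simp [hsub i h]

lemma admits_refineOctad (hσ : σ ∈ M24) (hc : Admits σ c) (hO : O ∈ octads) :
    Admits σ (refineOctad c O) := by
  unfold refineOctad
  split_ifs with h5
  · split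
    · next P hP =>
      intro x
      have hPx := image_eq_of_lookupImage_eq_some hσ hc hO h5 hP x
      by_cases hOx : O.testBit x
      · simp [hOx, Nat.testBit_and, hc x, hPx.2 hOx]
      · have hPx' : P.testBit (σ x) = false := by simpa [hOx] using hPx
        simp [hOx, Nat.testBit_and, Nat.testBit_xor, hc x, hPx']
    · next hnone => exact absurd hnone (lookupImage_ne_none hσ hc hO h5)
  · exact hc

lemma admits_refineStep (hσ : σ ∈ M24) (hc : Admits σ c) : Admits σ (refineStep c) := by
  rw [refineStep]
  generalize hl : octads.filter _ = l
  have hsub : ∀ O ∈ l, O ∈ octads := fun O hO => by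
    rw [← hl] at hO; exact (List.mem_filter.1 hO).1
  clear hl
  induction l generalizing c with
  | nil => exact hc
  | cons O l ih =>
    exact ih (admits_refineOctad hσ hc (hsub O List.mem_cons_self))
      (fun O' hO' => hsub O' (List.mem_cons_of_mem _ hO'))

end Refinement

theorem eq_one_of_certifyIdentity {σ : Perm X24} (hσ : σ ∈ M24) :
    ∀ (n : ℕ) (c : X24 → ℕ), certifyIdentity n c = true → Admits σ c → σ = 1
  | 0, _, h, _ => by simp [certifyIdentity] at h
  | n + 1, c, h, hc => by
    have hc' := admits_refineStep hσ (admits_refineStep hσ hc)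
    simp only [certifyIdentity, Bool.or_eq_true, List.any_eq_true, List.all_eq_true, beq_iff_eq,
      Option.any_eq_true] at h
    generalize refineStep (refineStep c) = c' at hc' h
    rcases h with (⟨x, -, hx⟩ | hid) | ⟨x, -, hbranch⟩
    · simpa [hx] using hc' x
    · ext x
      have := hc' x
      rw [hid x (List.mem_finRange x), Nat.testBit_two_pow, decide_eq_true_eq] at this
      simpa using this.symm
    · have hy := hbranch (σ x) (List.mem_range.2 (σ x).isLt)
      rw [hc' x] at hy
      refine eq_one_of_certifyIdentity hσ n _ (hy.resolve_left Bool.false_ne_true) fun z => ?_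
      by_cases hz : z = x
      · subst hz; simp
      · simp [hz, hc' z]

def initialCandidates : X24 → ℕ := fun x =>
  if x = 0 ∨ x ∈ Dset ∧ (rho x : ℕ) ≤ 5 then 2 ^ (x : ℕ)
  else if x ∈ Dset then finsetMask Dset else finsetMask Dsetᶜ

lemma admits_initialCandidates {σ : Perm X24} (h0 : σ 0 = 0) (hD : ∀ x, σ x ∈ Dset ↔ x ∈ Dset)
    (hfix : ∀ x ∈ Dset, (rho x : ℕ) ≤ 5 → σ x = x) : Admits σ initialCandidates := by
  intro x
  simp only [initialCandidates]
  split_ifs with hbase hD'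
  · rcases hbase with rfl | ⟨hx, hr⟩
    · simp [h0]
    · simp [hfix x hx hr]
  · exact (testBit_finsetMask _ _).2 ⟨σ x, (hD x).2 hD', rfl⟩
  · exact (testBit_finsetMask _ _).2 ⟨σ x, Finset.mem_compl.2 fun h => hD' ((hD x).1 h), rfl⟩

theorem certifyIdentity_initialCandidates : certifyIdentity 6 initialCandidates = true := by
  decide +kernel

theorem eq_one_of_fixes {σ : Perm X24} (hσ : σ ∈ M24) (hD : ∀ x, σ x ∈ Dset ↔ x ∈ Dset)
    (hfix : ∀ x ∈ Dset, (rho x : ℕ) ≤ 5 → σ x = x) : σ = 1 :=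
  eq_one_of_certifyIdentity hσ 6 _ certifyIdentity_initialCandidates
    (admits_initialCandidates (apply_zero_of_mem_M24 hσ) hD hfix)

open Pointwise in
lemma mem_StabD_iff {σ : Perm X24} : σ ∈ StabD ↔ σ ∈ M24 ∧ ∀ x, σ x ∈ Dset ↔ x ∈ Dset := by
  rw [StabD, Subgroup.mem_inf, MulAction.mem_stabilizer_iff]
  refine and_congr_right fun _ => ⟨fun h x => ?_, fun h => ?_⟩
  · have := Set.smul_mem_smul_set_iff (a := σ) (x := x) (s := (Dset : Set X24))
    rwa [h] at this
  · ext y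
    rw [Set.mem_smul_set_iff_inv_smul_mem, Finset.mem_coe, Finset.mem_coe, ← h]
    simp

lemma rho_ne_zero : ∀ x ∈ Dset, rho x ≠ 0 := by decide

lemma rho_injOn : ∀ x ∈ Dset, ∀ y ∈ Dset, rho x = rho y → x = y := by decide

lemma exists_rho_eq : ∀ y : Fin 13, y ≠ 0 → ∃ x ∈ Dset, rho x = y := by decide

noncomputable def rhoEquiv : (Dset : Set X24) ≃ {y : Fin 13 // y ≠ 0} :=
  Equiv.ofBijective (fun x => ⟨rho x, rho_ne_zero x x.2⟩)
    ⟨fun x y h => Subtype.ext (rho_injOn x x.2 y y.2 (congrArg Subtype.val h)),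
      fun y => let ⟨x, hx, hxy⟩ := exists_rho_eq y y.2; ⟨⟨x, hx⟩, Subtype.ext hxy⟩⟩

open Pointwise in
noncomputable def theta : StabD →* Perm (Fin 13) :=
  (Perm.extendDomainHom rhoEquiv).comp
    ((MulAction.toPermHom (MulAction.stabilizer (Perm X24) (Dset : Set X24)) (Dset : Set X24)).comp
      (Subgroup.inclusion inf_le_right))

lemma theta_apply_rho (σ : StabD) {x : X24} (hx : x ∈ Dset) :
    theta σ (rho x) = rho ((σ : Perm X24) x) :=
  Perm.extendDomain_apply_image _ rhoEquiv ⟨x, hx⟩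

lemma theta_apply_zero (σ : StabD) : theta σ 0 = 0 :=
  Perm.extendDomain_apply_not_subtype _ rhoEquiv (not_not.2 rfl)

lemma theta_eq_of (σ : StabD) {τ : Perm (Fin 13)} (h0 : τ 0 = 0)
    (h : ∀ x ∈ Dset, τ (rho x) = rho ((σ : Perm X24) x)) : theta σ = τ := by
  ext1 y
  by_cases hy : y = 0
  · rw [hy, h0, theta_apply_zero]
  · obtain ⟨x, hx, rfl⟩ := exists_rho_eq y hy
    rw [theta_apply_rho σ hx, h x hx]

lemma eq_one_of_theta_fixes (σ : StabD) (hfix : ∀ y : Fin 13, (y : ℕ) ≤ 5 → theta σ y = y) :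
    σ = 1 := by
  obtain ⟨hM, hD⟩ := mem_StabD_iff.1 σ.2
  refine Subtype.ext (eq_one_of_fixes hM hD fun x hx hr => ?_)
  exact rho_injOn _ ((hD x).2 hx) x hx (by rw [← theta_apply_rho σ hx, hfix _ hr])

theorem theta_injective : Function.Injective theta :=
  (injective_iff_map_eq_one theta).2 fun σ hσ =>
    eq_one_of_theta_fixes σ fun y _ => by rw [hσ]; rfl

def m12Gen : Fin 4 → Perm (Fin 13) := ![pA, pB, pC, pD]

def wordPerm (w : List (Fin 4)) : Perm (Fin 13) := (w.map m12Gen).prod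

lemma wordPerm_mem_M12 (w : List (Fin 4)) : wordPerm w ∈ M12 := by
  refine list_prod_mem fun g hg => ?_
  obtain ⟨i, -, rfl⟩ := List.mem_map.1 hg
  apply Subgroup.subset_closure
  fin_cases i <;> simp [m12Gen]

/-- `transversal k a` is a word for an element of `M₁₂` fixing `0, …, k` and sending `k + 1`
to `a`; together these words exhibit the 5-transitivity of `M₁₂`. -/
def transversal : ℕ → Fin 13 → List (Fin 4)
  | 0 => ![[], [], [3], [1, 0, 0], [1], [0, 0], [0], [2], [2, 0, 1], [2, 1], [0, 1], [2, 0], [1, 0]]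
  | 1 => ![[], [], [], [0, 2, 0, 0], [1, 3], [0, 1, 1, 0], [0, 3], [3, 2, 0, 0], [2, 0, 1, 0],
      [1, 2, 0, 0], [0, 1, 1, 3, 0], [0, 0, 1, 0, 0], [1, 1, 1, 0]]
  | 2 => ![[], [], [], [], [3, 1, 0, 3, 0, 0, 1], [0, 0, 1, 1, 2], [2, 0, 1, 1, 1],
      [2, 3, 0, 3, 2, 0], [0, 1, 2, 0, 3, 2], [1, 0, 2, 1, 0], [3, 0, 1, 0, 3, 2, 0, 2],
      [3, 0, 1, 0, 2, 0, 2], [1, 3, 0, 0, 3, 0, 0]]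
  | 3 => ![[], [], [], [], [], [3, 0, 0, 2, 3, 0, 0, 3, 0, 3], [1, 1, 0, 2, 3, 0, 2, 1],
      [0, 3, 1, 0, 0, 2, 1, 1], [1, 1, 1, 0, 3, 0, 0, 2, 0], [0, 0, 1, 2, 0, 0, 3, 0, 1, 0],
      [2, 0, 2, 3, 0, 3, 1, 1], [2, 1, 3, 0, 0, 3, 1, 0], [1, 2, 0, 0, 3, 2, 0, 0]]
  | _ => ![[], [], [], [], [], [], [0, 3, 0, 2, 0, 0, 3, 1, 0, 2, 0, 0, 0],
      [1, 3, 0, 0, 1, 2, 0, 1, 3, 0, 0, 2], [2, 3, 0, 2, 3, 1, 0, 1, 2, 0],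
      [2, 0, 1, 3, 0, 3, 2, 1, 0, 3, 1], [0, 0, 2, 1, 1, 0, 1, 3, 0, 2],
      [3, 1, 0, 2, 1, 0, 0, 3, 1, 0, 2, 1, 0, 0], [2, 0, 0, 1, 2, 0, 3, 0, 0, 2, 0, 0, 3]]

lemma transversal_spec : ∀ k (hk : k < 5) (a : Fin 13), k < (a : ℕ) →
    (∀ i : Fin 13, (i : ℕ) ≤ k → wordPerm (transversal k a) i = i) ∧
      wordPerm (transversal k a) ⟨k + 1, by omega⟩ = a := by
  decide +kernel

theorem exists_mem_M12_eqOn (τ : Perm (Fin 13)) (hτ : τ 0 = 0) :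
    ∃ κ ∈ M12, ∀ i : Fin 13, (i : ℕ) ≤ 5 → κ i = τ i := by
  suffices ∀ k ≤ 5, ∃ κ ∈ M12, ∀ i : Fin 13, (i : ℕ) ≤ k → (κ⁻¹ * τ) i = i by
    obtain ⟨κ, hκ, h⟩ := this 5 le_rfl
    refine ⟨κ, hκ, fun i hi => ?_⟩
    have := h i hi
    rw [Perm.mul_apply, Perm.inv_eq_iff_eq] at this
    exact this.symm
  intro k hk
  induction k with
  | zero =>
    refine ⟨1, one_mem _, fun i hi => ?_⟩
    rw [show i = 0 from Fin.ext (Nat.le_zero.1 hi)]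
    simpa using hτ
  | succ k ih =>
    obtain ⟨κ, hκ, hfix⟩ := ih (by omega)
    set ρ := κ⁻¹ * τ
    set p : Fin 13 := ⟨k + 1, by omega⟩
    have hp : (p : ℕ) = k + 1 := rfl
    have ha : k < (ρ p : ℕ) := by
      by_contra hle
      have := hfix _ (not_lt.1 hle)
      rw [ρ.injective this] at hle
      omega
    obtain ⟨hw, hwa⟩ := transversal_spec k (by omega) _ ha
    refine ⟨κ * wordPerm (transversal k (ρ p)), mul_mem hκ (wordPerm_mem_M12 _), fun i hi => ?_⟩
    rw [mul_inv_rev, mul_assoc, Perm.mul_apply, Perm.inv_eq_iff_eq]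
    rcases Nat.lt_or_ge (i : ℕ) (k + 1) with hi' | hi'
    · rw [hfix i (by omega), hw i (by omega)]
    · rw [show i = p from Fin.ext (by omega), hwa]

def ofCycles (l : List (List X24)) : Perm X24 := (l.map List.formPerm).prod

def m12GenLift : Fin 4 → Perm X24 := ![
  ofCycles [[1, 9, 3, 4, 18, 8, 12, 16, 2, 13, 6], [5, 19, 11, 15, 20, 22, 14, 10, 17, 7, 21]],
  ofCycles [[1, 3, 2, 18, 4], [5, 22, 7, 21, 11], [8, 12, 13, 16, 9], [10, 20, 14, 19, 17]],
  ofCycles [[1, 13], [2, 8], [3, 12], [4, 16], [5, 10], [6, 23], [7, 19], [9, 18], [11, 20],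
    [14, 21], [15, 24], [17, 22]],
  ofCycles [[2, 18], [3, 4], [5, 21], [7, 22], [8, 12], [9, 13], [10, 17], [19, 20]]]

lemma m12GenLift_mem_StabD (j : Fin 4) : m12GenLift j ∈ StabD := by
  refine mem_StabD_iff.2 ⟨mem_M24_of_masks ?_, ?_⟩
  · revert j; decide +kernel
  · revert j; decide +kernel

lemma theta_m12GenLift (j : Fin 4) : theta ⟨m12GenLift j, m12GenLift_mem_StabD j⟩ = m12Gen j :=
  theta_eq_of _ (by revert j; decide +kernel) (by revert j; decide +kernel)

theorem M12_le_range_theta : M12 ≤ theta.range := by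
  refine (Subgroup.closure_le _).2 ?_
  rintro _ (rfl | rfl | rfl | rfl)
  exacts [⟨_, theta_m12GenLift 0⟩, ⟨_, theta_m12GenLift 1⟩, ⟨_, theta_m12GenLift 2⟩,
    ⟨_, theta_m12GenLift 3⟩]

theorem range_theta_le_M12 : theta.range ≤ M12 := by
  rintro _ ⟨σ, rfl⟩
  obtain ⟨κ, hκ, hagree⟩ := exists_mem_M12_eqOn (theta σ) (theta_apply_zero σ)
  obtain ⟨σ', rfl⟩ := M12_le_range_theta hκ
  have : σ'⁻¹ * σ = 1 := eq_one_of_theta_fixes _ fun y hy => by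
    rw [map_mul, map_inv, Perm.mul_apply, Perm.inv_eq_iff_eq, hagree y hy]
  rwa [inv_mul_eq_one.1 this] at hκ

theorem statement16 :
    -- D is a dodecad
    indvec Dset ∈ Golay ∧ Dset.card = 12 ∧
    -- σ ↦ ρ ∘ (σ restricted to D) ∘ ρ⁻¹ is an injective group homomorphism from the setwise
    -- stabilizer of D in M₂₄ onto M₁₂
    ∃ Θ : StabD →* Equiv.Perm (Fin 13),
      Function.Injective Θ ∧
      (∀ σ : StabD, ∀ x ∈ Dset, Θ σ (rho x) = rho ((σ : Equiv.Perm X24) x)) ∧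
      Θ.range = M12 :=
  ⟨indvec_mem_golay (by decide +kernel), rfl, theta, theta_injective,
    fun σ _ hx => theta_apply_rho σ hx, le_antisymm range_theta_le_M12 M12_le_range_theta⟩
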